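/- arXiv:0904.2816 — 11 statements merged into one kernel-verified Lean document; each statement's English description precedes it below -/
import Mathlib

section
/- Let α ∈ (0,1)∪(1,4] and set d₁ = (−3α + √(3α(4−α)))/(2(1−α)) and d₂ = (−3α − √(3α(4−α)))/(2(1−α)). For real numbers n, n₁, n₂ with n = n₁ + n₂ and n ≠ 0, one has α n³ − n₁³ − α n₂³ = 0 if and only if (n₁, n₂) = (0, n) or (n₁, n₂) = (d₁ n, (1 − d₁) n) or (n₁, n₂) = (d₂ n, (1 − d₂) n). -/
/-! Writing `n₂ = n - n₁`, the resonance function is `n₁ ((α - 1) n₁² - 3α n n₁ + 3α n²)`, and the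
quadratic factor has the roots `d₁ n` and `d₂ n` by the quadratic formula. -/

theorem resonance_eq_mul_roots {α d₁ d₂ : ℝ} (hsum : (α - 1) * (d₁ + d₂) = 3 * α)
    (hprod : (α - 1) * (d₁ * d₂) = 3 * α) (n n₁ : ℝ) :
    α * n ^ 3 - n₁ ^ 3 - α * (n - n₁) ^ 3 =
      (α - 1) * n₁ * (n₁ - d₁ * n) * (n₁ - d₂ * n) := by
  linear_combination n * n₁ ^ 2 * hsum - n ^ 2 * n₁ * hprod

theorem resonance_roots_sum_prod {α s : ℝ} (hα1 : α ≠ 1) (hs : s ^ 2 = 3 * α * (4 - α)) :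
    (α - 1) * ((-3 * α + s) / (2 * (1 - α)) + (-3 * α - s) / (2 * (1 - α))) = 3 * α ∧
      (α - 1) * ((-3 * α + s) / (2 * (1 - α)) * ((-3 * α - s) / (2 * (1 - α)))) = 3 * α := by
  have h1α : 1 - α ≠ 0 := sub_ne_zero.2 hα1.symm
  constructor
  · field_simp
    ring
  · field_simp
    linear_combination (1 - α) * hs

theorem stmt_3_general (α : ℝ) (hα : 0 < α) (hα4 : α ≤ 4) (hα1 : α ≠ 1)
    (d₁ d₂ : ℝ)
    (hd₁ : d₁ = (-3 * α + Real.sqrt (3 * α * (4 - α))) / (2 * (1 - α)))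
    (hd₂ : d₂ = (-3 * α - Real.sqrt (3 * α * (4 - α))) / (2 * (1 - α)))
    (n n₁ n₂ : ℝ) (hsum : n = n₁ + n₂) :
    α * n ^ 3 - n₁ ^ 3 - α * n₂ ^ 3 = 0 ↔
      (n₁, n₂) = (0, n) ∨ (n₁, n₂) = (d₁ * n, (1 - d₁) * n) ∨
        (n₁, n₂) = (d₂ * n, (1 - d₂) * n) := by
  have hs : Real.sqrt (3 * α * (4 - α)) ^ 2 = 3 * α * (4 - α) :=
    Real.sq_sqrt (by nlinarith)
  obtain ⟨hsum_roots, hprod_roots⟩ := resonance_roots_sum_prod hα1 hs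
  rw [← hd₁, ← hd₂] at hsum_roots hprod_roots
  obtain rfl : n₂ = n - n₁ := by linarith
  rw [resonance_eq_mul_roots hsum_roots hprod_roots, mul_eq_zero, mul_eq_zero, mul_eq_zero,
    sub_eq_zero, sub_eq_zero, sub_eq_zero]
  simp only [hα1, false_or, or_assoc, Prod.mk.injEq]
  refine or_congr (iff_self_and.2 ?_) (or_congr (iff_self_and.2 ?_) (iff_self_and.2 ?_)) <;>
    rintro rfl <;> ring

theorem stmt_3 (α : ℝ) (hα : 0 < α) (hα4 : α ≤ 4) (hα1 : α ≠ 1)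
    (d₁ d₂ : ℝ)
    (hd₁ : d₁ = (-3 * α + Real.sqrt (3 * α * (4 - α))) / (2 * (1 - α)))
    (hd₂ : d₂ = (-3 * α - Real.sqrt (3 * α * (4 - α))) / (2 * (1 - α)))
    (n n₁ n₂ : ℝ) (hsum : n = n₁ + n₂) (hn : n ≠ 0) :
    α * n ^ 3 - n₁ ^ 3 - α * n₂ ^ 3 = 0 ↔
      (n₁, n₂) = (0, n) ∨ (n₁, n₂) = (d₁ * n, (1 - d₁) * n) ∨
        (n₁, n₂) = (d₂ * n, (1 - d₂) * n) :=
  stmt_3_general α hα hα4 hα1 d₁ d₂ hd₁ hd₂ n n₁ n₂ hsum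
end

section
/- Let 0 < α ≤ 4 and set c₁ = 1/2 + √(12/α − 3)/6 and c₂ = 1/2 − √(12/α − 3)/6. If c₁ is irrational, then for all integers n, n₁, n₂ with n = n₁ + n₂ and n ≠ 0 one has n³ − α n₁³ − α n₂³ ≠ 0; that is, the resonance equation has no nontrivial integer solutions. -/
/-!
Writing `n = n₁ + n₂`, the resonance function factors as `3 α n (n₁ - c₁ n) (n₂ - c₁ n)`,
because `c₁` and `1 - c₁ = c₂` are the roots of `3 α t² - 3 α t + α - 1`. When `c₁` is irrational
neither linear factor can vanish at integers with `n ≠ 0`.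
-/

lemma Irrational.intCast_sub_mul_ne_zero {c : ℝ} (hc : Irrational c) (m : ℤ) {n : ℤ}
    (hn : n ≠ 0) : (m : ℝ) - c * n ≠ 0 :=
  sub_ne_zero.mpr ((hc.mul_intCast hn).ne_int m).symm

lemma resonance_eq_mul {α c : ℝ} (hc : 3 * α * (c * (1 - c)) = α - 1) (x y : ℝ) :
    (x + y) ^ 3 - α * x ^ 3 - α * y ^ 3 =
      3 * α * (x + y) * (x - c * (x + y)) * (y - c * (x + y)) := by
  linear_combination (x + y) ^ 3 * hc

lemma resonance_root_mul_one_sub {α c : ℝ} (hα : 0 < α) (hα4 : α ≤ 4)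
    (hc : c = 1/2 + Real.sqrt (12/α - 3) / 6) : 3 * α * (c * (1 - c)) = α - 1 := by
  subst hc
  have hsq : Real.sqrt (12/α - 3) ^ 2 = 12/α - 3 :=
    Real.sq_sqrt (by rw [sub_nonneg, le_div_iff₀ hα]; linarith)
  have hmul : α * (12 / α) = 12 := mul_div_cancel₀ 12 hα.ne'
  linear_combination (-α / 12) * hsq - hmul / 12

theorem stmt_4_general (α : ℝ) (hα : 0 < α) (hα4 : α ≤ 4)
    (c₁ : ℝ)
    (hc₁ : c₁ = 1/2 + Real.sqrt (12/α - 3) / 6)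
    (hirr : Irrational c₁) :
    ∀ n n₁ n₂ : ℤ, n = n₁ + n₂ → n ≠ 0 →
      (n : ℝ) ^ 3 - α * (n₁ : ℝ) ^ 3 - α * (n₂ : ℝ) ^ 3 ≠ 0 := by
  rintro n n₁ n₂ rfl hn
  rw [Int.cast_add, resonance_eq_mul (resonance_root_mul_one_sub hα hα4 hc₁), ← Int.cast_add]
  exact mul_ne_zero (mul_ne_zero (mul_ne_zero (by positivity) (by exact_mod_cast hn))
    (hirr.intCast_sub_mul_ne_zero n₁ hn)) (hirr.intCast_sub_mul_ne_zero n₂ hn)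

theorem stmt_4 (α : ℝ) (hα : 0 < α) (hα4 : α ≤ 4)
    (c₁ c₂ : ℝ)
    (hc₁ : c₁ = 1/2 + Real.sqrt (12/α - 3) / 6)
    (hc₂ : c₂ = 1/2 - Real.sqrt (12/α - 3) / 6)
    (hirr : Irrational c₁) :
    ∀ n n₁ n₂ : ℤ, n = n₁ + n₂ → n ≠ 0 →
      (n : ℝ) ^ 3 - α * (n₁ : ℝ) ^ 3 - α * (n₂ : ℝ) ^ 3 ≠ 0 :=
  stmt_4_general α hα hα4 c₁ hc₁ hirr
end

section
/- Let α ∈ (0,1)∪(1,4] and set d₁ = (−3α + √(3α(4−α)))/(2(1−α)) and d₂ = (−3α − √(3α(4−α)))/(2(1−α)). If d₁ and d₂ are irrational, then for all integers n, n₁, n₂ with n = n₁ + n₂, n ≠ 0, and α n³ − n₁³ − α n₂³ = 0, one has n₁ = 0 and n₂ = n. -/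
/-!
Substituting `n₂ = n - n₁`, the resonance function factors as `n₁` times a quadratic form in
`(n₁, n)`. If `n₁ ≠ 0`, the ratio `n₁ / n` is a rational root of the quadratic
`(1 - α) q² + 3α q - 3α`, whose roots are exactly `d₁` and `d₂`; this contradicts their
irrationality.
-/

lemma resonance_div_cube {K : Type*} [Field K] {α n n₁ : K} (hn : n ≠ 0) :
    (α * n ^ 3 - n₁ ^ 3 - α * (n - n₁) ^ 3) / n ^ 3 =
      -(n₁ / n * ((1 - α) * (n₁ / n * (n₁ / n)) + 3 * α * (n₁ / n) + -3 * α)) := by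
  field_simp
  ring

lemma Real.eq_root_of_quadratic_eq_zero {a b c x : ℝ} (ha : a ≠ 0)
    (h : a * (x * x) + b * x + c = 0) :
    x = (-b + √(discrim a b c)) / (2 * a) ∨ x = (-b - √(discrim a b c)) / (2 * a) := by
  have hdisc : discrim a b c = √(discrim a b c) * √(discrim a b c) :=
    (Real.mul_self_sqrt (discrim_eq_sq_of_quadratic_eq_zero h ▸ sq_nonneg _)).symm
  exact (quadratic_eq_zero_iff ha hdisc x).1 h

theorem stmt_5_general (α : ℝ) (hα1 : α ≠ 1)
    (d₁ d₂ : ℝ)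
    (hd₁ : d₁ = (-3 * α + Real.sqrt (3 * α * (4 - α))) / (2 * (1 - α)))
    (hd₂ : d₂ = (-3 * α - Real.sqrt (3 * α * (4 - α))) / (2 * (1 - α)))
    (hirr₁ : Irrational d₁) (hirr₂ : Irrational d₂) :
    ∀ n n₁ n₂ : ℤ, n = n₁ + n₂ → n ≠ 0 →
      α * (n : ℝ) ^ 3 - (n₁ : ℝ) ^ 3 - α * (n₂ : ℝ) ^ 3 = 0 →
      n₁ = 0 ∧ n₂ = n := by
  intro n n₁ n₂ hsum hn h
  have hn' : (n : ℝ) ≠ 0 := by exact_mod_cast hn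
  have hn₂ : (n₂ : ℝ) = n - n₁ := by rw [hsum]; push_cast; ring
  have hres := resonance_div_cube (α := α) (n₁ := (n₁ : ℝ)) hn'
  rw [← hn₂, h, zero_div, zero_eq_neg] at hres
  rcases mul_eq_zero.1 hres with hratio | hquad
  · have hn₁ : n₁ = 0 := by simpa [hn'] using hratio
    omega
  · have hdisc : discrim (1 - α) (3 * α) (-3 * α) = 3 * α * (4 - α) := by
      rw [discrim]
      ring
    rcases Real.eq_root_of_quadratic_eq_zero (sub_ne_zero.2 hα1.symm) hquad with hq | hq <;>
      rw [hdisc, ← neg_mul] at hq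
    · exact (hirr₁.ne_rational n₁ n (by rw [hd₁, ← hq])).elim
    · exact (hirr₂.ne_rational n₁ n (by rw [hd₂, ← hq])).elim

theorem stmt_5 (α : ℝ) (hα : 0 < α) (hα4 : α ≤ 4) (hα1 : α ≠ 1)
    (d₁ d₂ : ℝ)
    (hd₁ : d₁ = (-3 * α + Real.sqrt (3 * α * (4 - α))) / (2 * (1 - α)))
    (hd₂ : d₂ = (-3 * α - Real.sqrt (3 * α * (4 - α))) / (2 * (1 - α)))
    (hirr₁ : Irrational d₁) (hirr₂ : Irrational d₂) :
    ∀ n n₁ n₂ : ℤ, n = n₁ + n₂ → n ≠ 0 →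
      α * (n : ℝ) ^ 3 - (n₁ : ℝ) ^ 3 - α * (n₂ : ℝ) ^ 3 = 0 →
      n₁ = 0 ∧ n₂ = n :=
  stmt_5_general α hα1 d₁ d₂ hd₁ hd₂ hirr₁ hirr₂
end

section
/- Let 0 < α < 4 and set c₁ = 1/2 + √(12/α − 3)/6 and c₂ = 1/2 − √(12/α − 3)/6. Suppose c₁ is of type (K, ν) for some K, ν > 0. Then there exists a constant C > 0, depending only on α, K, and ν, such that for all integers n, n₁, n₂ with n = n₁ + n₂ and n ≠ 0, one has |n³ − α n₁³ − α n₂³| ≥ C |n|^{1−ν}. -/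
/-- A real number `ρ` is of type `(K, ν)` if `|ρ - m/q| ≥ K / |q|^(2+ν)`
for all integers `m` and all nonzero integers `q`. -/
def IsOfType (ρ K ν : ℝ) : Prop :=
  ∀ m q : ℤ, q ≠ 0 → K / |(q : ℝ)| ^ (2 + ν) ≤ |ρ - (m : ℝ) / (q : ℝ)|

theorem stmt_6 (α : ℝ) (hα : 0 < α) (hα4 : α < 4)
    (c₁ c₂ : ℝ)
    (hc₁ : c₁ = 1/2 + Real.sqrt (12/α - 3) / 6)
    (hc₂ : c₂ = 1/2 - Real.sqrt (12/α - 3) / 6)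
    (K ν : ℝ) (hK : 0 < K) (hν : 0 < ν) (htype : IsOfType c₁ K ν) :
    ∃ C > 0, ∀ n n₁ n₂ : ℤ, n = n₁ + n₂ → n ≠ 0 →
      C * |(n : ℝ)| ^ (1 - ν) ≤
        |(n : ℝ) ^ 3 - α * (n₁ : ℝ) ^ 3 - α * (n₂ : ℝ) ^ 3| := by
  have h12 : 0 < 12/α - 3 := by
    have h3 : 3 < 12/α := by
      rw [lt_div_iff₀ hα]; linarith
    linarith
  set s := Real.sqrt (12/α - 3) with hs
  have hs2 : s^2 = 12/α - 3 := Real.sq_sqrt h12.le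
  have hspos : 0 < s := Real.sqrt_pos.mpr h12
  have hc : 3*α*(c₁^2 - c₁) = 1 - α := by
    have he : c₁^2 - c₁ = s^2/36 - 1/4 := by rw [hc₁]; ring
    rw [he, hs2]
    field_simp
    ring
  refine ⟨3 * α * K * (s/6), by positivity, ?_⟩
  intro n n₁ n₂ hn hn0
  have hNone : (1:ℝ) ≤ |(n:ℝ)| := by
    rw [← Int.cast_abs]; exact_mod_cast Int.one_le_abs hn0
  have hN0 : (0:ℝ) < |(n:ℝ)| := lt_of_lt_of_le one_pos hNone
  have hNne : (n:ℝ) ≠ 0 := by exact_mod_cast hn0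
  have hcast : (n:ℝ) = (n₁:ℝ) + (n₂:ℝ) := by exact_mod_cast hn
  have hA := htype n₁ n hn0
  have hB := htype n₂ n hn0
  set A := |c₁ - (n₁:ℝ)/(n:ℝ)| with hAdef
  set B := |c₁ - (n₂:ℝ)/(n:ℝ)| with hBdef
  have hKq : 0 < K / |(n:ℝ)|^(2+ν) := by positivity
  -- A + B ≥ s/3
  have hsum : s/3 ≤ A + B := by
    have hid : (c₁ - (n₁:ℝ)/(n:ℝ)) + (c₁ - (n₂:ℝ)/(n:ℝ)) = s/3 := by
      rw [hc₁]
      field_simp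
      linarith [hcast]
    calc s/3 = |(c₁ - (n₁:ℝ)/(n:ℝ)) + (c₁ - (n₂:ℝ)/(n:ℝ))| := by
            rw [hid]; exact (abs_of_pos (by positivity)).symm
      _ ≤ A + B := abs_add_le _ _
  have hAB : (s/6) * (K / |(n:ℝ)|^(2+ν)) ≤ A * B := by
    rcases le_or_gt (s/6) A with h | h
    · exact mul_le_mul h hB hKq.le (abs_nonneg _)
    · have hB6 : s/6 ≤ B := by linarith
      calc (s/6) * (K / |(n:ℝ)|^(2+ν)) = (K / |(n:ℝ)|^(2+ν)) * (s/6) := by ring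
        _ ≤ A * B := mul_le_mul hA hB6 (by positivity) (abs_nonneg _)
  -- key factorization
  have hkey : (n:ℝ)^3 - α*(n₁:ℝ)^3 - α*(n₂:ℝ)^3
      = 3*α*(n:ℝ)*(c₁*(n:ℝ) - n₁)*(c₁*(n:ℝ) - n₂) := by
    rw [hcast]
    linear_combination (-(((n₁:ℝ)+(n₂:ℝ))^3)) * hc
  have hfac1 : |c₁*(n:ℝ) - n₁| = |(n:ℝ)| * A := by
    rw [hAdef, ← abs_mul]
    congr 1
    field_simp
  have hfac2 : |c₁*(n:ℝ) - n₂| = |(n:ℝ)| * B := by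
    rw [hBdef, ← abs_mul]
    congr 1
    field_simp
  have habs : |(n:ℝ)^3 - α*(n₁:ℝ)^3 - α*(n₂:ℝ)^3|
      = 3*α*|(n:ℝ)|^3 * (A*B) := by
    rw [hkey, abs_mul, abs_mul, hfac1, hfac2, abs_mul, abs_mul]
    rw [abs_of_pos (by positivity : (0:ℝ) < (3:ℝ)), abs_of_pos hα]
    ring
  rw [habs]
  have hpow : |(n:ℝ)|^(1-ν) = |(n:ℝ)|^3 / |(n:ℝ)|^(2+ν) := by
    rw [show (1-ν) = ((3:ℕ):ℝ) - (2+ν) by push_cast; ring, Real.rpow_sub hN0,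
      Real.rpow_natCast]
  calc 3 * α * K * (s/6) * |(n:ℝ)|^(1-ν)
      = 3*α*|(n:ℝ)|^3 * ((s/6) * (K / |(n:ℝ)|^(2+ν))) := by rw [hpow]; ring
    _ ≤ 3*α*|(n:ℝ)|^3 * (A*B) :=
        mul_le_mul_of_nonneg_left hAB (by positivity)
end

section
/- Let α ∈ (0,1)∪(1,4) and set d₁ = (−3α + √(3α(4−α)))/(2(1−α)) and d₂ = (−3α − √(3α(4−α)))/(2(1−α)). Suppose both d₁ and d₂ are of type (K, ν) for some K, ν > 0. Then there exists a constant C > 0, depending only on α, K, and ν, such that for all integers n, n₁, n₂ with n = n₁ + n₂, n ≠ 0, and n₁ ≠ 0, one has |α n³ − n₁³ − α n₂³| ≥ C |n₁| |n|^{−ν}. -/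
/-!
The resonance function factors as `(α - 1) n₁ (n₁ - d₁ n) (n₁ - d₂ n)`, since `d₁, d₂` are the
roots of `(1 - α) t² + 3α t - 3α`. As `d₁ ≠ d₂`, the two numbers `n₁ - dᵢ n` are `|n| |d₁ - d₂|`
apart, so one of them is at least `|n| |d₁ - d₂| / 2`, while the Diophantine condition bounds
each of them below by `K |n|^(-1-ν)`.
-/

theorem IsOfType.mul_rpow_le_abs_sub {ρ K ν : ℝ} (h : IsOfType ρ K ν) (m q : ℤ) (hq : q ≠ 0) :
    K * |(q : ℝ)| ^ (-(1 + ν)) ≤ |m - ρ * q| := by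
  have hq' : 0 < |(q : ℝ)| := abs_pos.mpr (Int.cast_ne_zero.mpr hq)
  have hscale : |(m : ℝ) - ρ * q| = |(q : ℝ)| * |ρ - m / q| := by
    rw [← abs_mul, abs_sub_comm, mul_sub, mul_div_cancel₀ _ (Int.cast_ne_zero.mpr hq), mul_comm]
  calc K * |(q : ℝ)| ^ (-(1 + ν)) = |(q : ℝ)| * (K / |(q : ℝ)| ^ (2 + ν)) := by
        rw [Real.rpow_neg hq'.le, show (2 + ν) = (1 + ν) + 1 by ring, Real.rpow_add_one hq'.ne']
        field_simp
    _ ≤ |(m : ℝ) - ρ * q| := by rw [hscale]; gcongr; exact h m q hq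

theorem mul_half_abs_sub_le_abs_mul_abs {a b L : ℝ} (ha : L ≤ |a|) (hb : L ≤ |b|) :
    L * (|a - b| / 2) ≤ |a| * |b| := by
  have hab := abs_sub a b
  rcases le_total |b| |a| with h | h
  · rw [mul_comm |a|]; exact mul_le_mul hb (by linarith) (by positivity) (abs_nonneg b)
  · exact mul_le_mul ha (by linarith) (by positivity) (abs_nonneg a)

theorem IsOfType.mul_rpow_le_abs_sub_mul_abs_sub {d₁ d₂ K ν : ℝ}
    (h₁ : IsOfType d₁ K ν) (h₂ : IsOfType d₂ K ν) (m q : ℤ) (hq : q ≠ 0) :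
    K * |d₁ - d₂| / 2 * |(q : ℝ)| ^ (-ν) ≤ |m - d₁ * q| * |m - d₂ * q| := by
  have hq' : |(q : ℝ)| ≠ 0 := abs_ne_zero.mpr (Int.cast_ne_zero.mpr hq)
  have hsep : |((m : ℝ) - d₁ * q) - (m - d₂ * q)| = |(q : ℝ)| * |d₁ - d₂| := by
    rw [← abs_mul, ← abs_neg]; ring_nf
  calc K * |d₁ - d₂| / 2 * |(q : ℝ)| ^ (-ν)
      = K * |(q : ℝ)| ^ (-(1 + ν)) * (|(q : ℝ)| * |d₁ - d₂| / 2) := by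
        rw [show -ν = -(1 + ν) + 1 by ring, Real.rpow_add_one hq']; ring
    _ ≤ |m - d₁ * q| * |m - d₂ * q| := by
        rw [← hsep]
        exact mul_half_abs_sub_le_abs_mul_abs
          (h₁.mul_rpow_le_abs_sub m q hq) (h₂.mul_rpow_le_abs_sub m q hq)

theorem resonance_eq_factor {α s d₁ d₂ : ℝ} (hα1 : α ≠ 1) (hs : s ^ 2 = 3 * α * (4 - α))
    (hd₁ : d₁ = (-3 * α + s) / (2 * (1 - α))) (hd₂ : d₂ = (-3 * α - s) / (2 * (1 - α)))
    {n n₁ n₂ : ℝ} (hn : n = n₁ + n₂) :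
    α * n ^ 3 - n₁ ^ 3 - α * n₂ ^ 3 = (α - 1) * n₁ * (n₁ - d₁ * n) * (n₁ - d₂ * n) := by
  have h1α : 1 - α ≠ 0 := sub_ne_zero.mpr hα1.symm
  subst hd₁ hd₂ hn
  field_simp
  linear_combination (α - 1) * n₁ * (n₁ + n₂) ^ 2 * hs

theorem stmt_7_general (α : ℝ) (hα : 0 < α) (hα4 : α < 4) (hα1 : α ≠ 1)
    (d₁ d₂ : ℝ)
    (hd₁ : d₁ = (-3 * α + Real.sqrt (3 * α * (4 - α))) / (2 * (1 - α)))
    (hd₂ : d₂ = (-3 * α - Real.sqrt (3 * α * (4 - α))) / (2 * (1 - α)))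
    (K ν : ℝ) (hK : 0 < K)
    (htype₁ : IsOfType d₁ K ν) (htype₂ : IsOfType d₂ K ν) :
    ∃ C > 0, ∀ n n₁ n₂ : ℤ, n = n₁ + n₂ → n ≠ 0 → n₁ ≠ 0 →
      C * |(n₁ : ℝ)| * |(n : ℝ)| ^ (-ν) ≤
        |α * (n : ℝ) ^ 3 - (n₁ : ℝ) ^ 3 - α * (n₂ : ℝ) ^ 3| := by
  have hdisc : 0 < 3 * α * (4 - α) := by nlinarith
  have hs := Real.sq_sqrt hdisc.le
  have hne : d₁ ≠ d₂ := by
    have h1α : 1 - α ≠ 0 := sub_ne_zero.mpr hα1.symm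
    rw [hd₁, hd₂, Ne, div_left_inj' (mul_ne_zero two_ne_zero h1α)]
    linarith [Real.sqrt_pos.mpr hdisc]
  refine ⟨|α - 1| * (K * |d₁ - d₂| / 2),
    by positivity [sub_ne_zero.mpr hα1, sub_ne_zero.mpr hne], ?_⟩
  intro n n₁ n₂ hn hn0 _
  calc |α - 1| * (K * |d₁ - d₂| / 2) * |(n₁ : ℝ)| * |(n : ℝ)| ^ (-ν)
      = |α - 1| * |(n₁ : ℝ)| * (K * |d₁ - d₂| / 2 * |(n : ℝ)| ^ (-ν)) := by ring
    _ ≤ |α - 1| * |(n₁ : ℝ)| * (|n₁ - d₁ * n| * |n₁ - d₂ * n|) := by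
      gcongr _ * ?_
      exact htype₁.mul_rpow_le_abs_sub_mul_abs_sub htype₂ n₁ n hn0
    _ = |α * (n : ℝ) ^ 3 - (n₁ : ℝ) ^ 3 - α * (n₂ : ℝ) ^ 3| := by
      rw [resonance_eq_factor hα1 hs hd₁ hd₂ (by exact_mod_cast hn)]
      simp only [abs_mul, mul_assoc]

theorem stmt_7 (α : ℝ) (hα : 0 < α) (hα4 : α < 4) (hα1 : α ≠ 1)
    (d₁ d₂ : ℝ)
    (hd₁ : d₁ = (-3 * α + Real.sqrt (3 * α * (4 - α))) / (2 * (1 - α)))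
    (hd₂ : d₂ = (-3 * α - Real.sqrt (3 * α * (4 - α))) / (2 * (1 - α)))
    (K ν : ℝ) (hK : 0 < K) (hν : 0 < ν)
    (htype₁ : IsOfType d₁ K ν) (htype₂ : IsOfType d₂ K ν) :
    ∃ C > 0, ∀ n n₁ n₂ : ℤ, n = n₁ + n₂ → n ≠ 0 → n₁ ≠ 0 →
      C * |(n₁ : ℝ)| * |(n : ℝ)| ^ (-ν) ≤
        |α * (n : ℝ) ^ 3 - (n₁ : ℝ) ^ 3 - α * (n₂ : ℝ) ^ 3| :=
  stmt_7_general α hα hα4 hα1 d₁ d₂ hd₁ hd₂ K ν hK htype₁ htype₂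
end

section
/- Let 0 < α < 4 and set c₁ = 1/2 + √(12/α − 3)/6 and c₂ = 1/2 − √(12/α − 3)/6 (so c₁ > c₂). Then for all integers n, n₁, n₂ with n = n₁ + n₂, |n₁ − c₁ n| ≥ 1, and |n₁ − c₂ n| ≥ 1, one has |n³ − α n₁³ − α n₂³| ≥ (3α(c₁ − c₂)/2) · n². -/
/-!
Writing `n₂ = n - n₁`, the resonance function `n³ - α n₁³ - α n₂³` is `-3α n` times a quadratic
in `n₁` whose roots are `c₁ n` and `c₂ n`. Away from the resonances both linear factors have
absolute value at least `1`, so their product is at least half their sum, and by the triangle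
inequality that sum is at least `(c₁ - c₂) |n|`.
-/

lemma cube_sub_mul_cube_sub_mul_cube_eq (α c₁ c₂ n n₁ n₂ : ℝ) (hn : n = n₁ + n₂)
    (hsum : c₁ + c₂ = 1) (hprod : 3 * α * (c₁ * c₂) = α - 1) :
    n ^ 3 - α * n₁ ^ 3 - α * n₂ ^ 3 = -(3 * α * (n * ((n₁ - c₁ * n) * (n₁ - c₂ * n)))) := by
  obtain rfl : n₂ = n - n₁ := by linarith
  linear_combination (-3 * α * n ^ 2 * n₁) * hsum + n ^ 3 * hprod

lemma three_mul_mul_resonance_roots {α : ℝ} (hα : 0 < α) (hα4 : α ≤ 4) :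
    3 * α * ((1/2 + √(12/α - 3) / 6) * (1/2 - √(12/α - 3) / 6)) = α - 1 := by
  have hnonneg : 0 ≤ 12 / α - 3 := by
    rw [sub_nonneg, le_div_iff₀ hα]
    linarith
  have hsq : α * √(12/α - 3) ^ 2 = 12 - 3 * α := by
    rw [Real.sq_sqrt hnonneg]
    field_simp
  linear_combination (-1 / 12) * hsq

lemma abs_sub_mul_abs_le_two_mul_abs_mul (c₁ c₂ n m : ℝ)
    (h₁ : 1 ≤ |m - c₁ * n|) (h₂ : 1 ≤ |m - c₂ * n|) :
    |c₁ - c₂| * |n| ≤ 2 * |(m - c₁ * n) * (m - c₂ * n)| := by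
  have htriangle : |c₁ - c₂| * |n| ≤ |m - c₁ * n| + |m - c₂ * n| := by
    rw [← abs_mul, show (c₁ - c₂) * n = (m - c₂ * n) - (m - c₁ * n) by ring, add_comm]
    exact abs_sub _ _
  rw [abs_mul]
  nlinarith [mul_nonneg (sub_nonneg.2 h₁) (sub_nonneg.2 h₂)]

theorem stmt_8 (α : ℝ) (hα : 0 < α) (hα4 : α < 4)
    (c₁ c₂ : ℝ)
    (hc₁ : c₁ = 1/2 + Real.sqrt (12/α - 3) / 6)
    (hc₂ : c₂ = 1/2 - Real.sqrt (12/α - 3) / 6) :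
    ∀ n n₁ n₂ : ℤ, n = n₁ + n₂ →
      1 ≤ |(n₁ : ℝ) - c₁ * (n : ℝ)| → 1 ≤ |(n₁ : ℝ) - c₂ * (n : ℝ)| →
      3 * α * (c₁ - c₂) / 2 * (n : ℝ) ^ 2 ≤
        |(n : ℝ) ^ 3 - α * (n₁ : ℝ) ^ 3 - α * (n₂ : ℝ) ^ 3| := by
  intro n n₁ n₂ hn h₁ h₂
  have hprod : 3 * α * (c₁ * c₂) = α - 1 := by
    rw [hc₁, hc₂]
    exact three_mul_mul_resonance_roots hα hα4.le
  have hsum : c₁ + c₂ = 1 := by rw [hc₁, hc₂]; ring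
  rw [cube_sub_mul_cube_sub_mul_cube_eq α c₁ c₂ n n₁ n₂ (mod_cast hn) hsum hprod,
    abs_neg, abs_mul (3 * α), abs_mul (n : ℝ), abs_of_pos (by positivity : 0 < 3 * α)]
  have hbound := abs_sub_mul_abs_le_two_mul_abs_mul c₁ c₂ n n₁ h₁ h₂
  calc 3 * α * (c₁ - c₂) / 2 * (n : ℝ) ^ 2
      = 3 * α / 2 * |(n : ℝ)| ^ 2 * (c₁ - c₂) := by rw [sq_abs]; ring
    _ ≤ 3 * α / 2 * |(n : ℝ)| ^ 2 * |c₁ - c₂| := by gcongr; exact le_abs_self _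
    _ = 3 * α / 2 * |(n : ℝ)| * (|c₁ - c₂| * |(n : ℝ)|) := by ring
    _ ≤ 3 * α / 2 * |(n : ℝ)| * (2 * |((n₁ : ℝ) - c₁ * n) * (n₁ - c₂ * n)|) := by gcongr
    _ = 3 * α * (|(n : ℝ)| * |((n₁ : ℝ) - c₁ * n) * (n₁ - c₂ * n)|) := by ring
end

section
/- Let α ∈ (0,1)∪(1,4) and set d₁ = (−3α + √(3α(4−α)))/(2(1−α)) and d₂ = (−3α − √(3α(4−α)))/(2(1−α)). Then for all integers n, n₁, n₂ with n = n₁ + n₂, |n₁ − d₁ n| ≥ 1, and |n₁ − d₂ n| ≥ 1, one has |α n³ − n₁³ − α n₂³| ≥ (|α − 1| · |d₁ − d₂| / 2) · |n₁| · |n|. -/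
/-! The resonance function factors as `α n³ - n₁³ - α n₂³ = (α - 1) n₁ (n₁ - d₁ n) (n₁ - d₂ n)`,
since `d₁, d₂` are the roots of `(α - 1) d² - 3α d + 3α`. Away from resonances both linear
factors have modulus at least `1`, and two reals `x, y` with `|x|, |y| ≥ 1` satisfy
`|x - y| ≤ |x| + |y| ≤ 2 |x| |y|`; applied to `x - y = (d₂ - d₁) n` this gives the bound. -/

lemma abs_sub_le_two_mul_abs_mul_abs {x y : ℝ} (hx : 1 ≤ |x|) (hy : 1 ≤ |y|) :
    |x - y| ≤ 2 * (|x| * |y|) := by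
  have hx' : |y| ≤ |x| * |y| := le_mul_of_one_le_left (abs_nonneg y) hx
  have hy' : |x| ≤ |x| * |y| := le_mul_of_one_le_right (abs_nonneg x) hy
  linarith [abs_sub x y]

lemma resonance_eq_mul_of_vieta {α d₁ d₂ : ℝ} (hsum : (α - 1) * (d₁ + d₂) = 3 * α)
    (hprod : (α - 1) * (d₁ * d₂) = 3 * α) (n n₁ n₂ : ℝ) (hn : n = n₁ + n₂) :
    α * n ^ 3 - n₁ ^ 3 - α * n₂ ^ 3 = (α - 1) * n₁ * (n₁ - d₁ * n) * (n₁ - d₂ * n) := by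
  obtain rfl : n₂ = n - n₁ := by linarith
  linear_combination n₁ ^ 2 * n * hsum - n₁ * n ^ 2 * hprod

lemma resonance_roots_add {α : ℝ} (hα1 : α ≠ 1) :
    (α - 1) * ((-3 * α + √(3 * α * (4 - α))) / (2 * (1 - α)) +
      (-3 * α - √(3 * α * (4 - α))) / (2 * (1 - α))) = 3 * α := by
  have h : 1 - α ≠ 0 := sub_ne_zero.mpr hα1.symm
  field_simp
  ring

lemma resonance_roots_mul {α : ℝ} (hα1 : α ≠ 1) (hα : 0 ≤ α) (hα4 : α ≤ 4) :
    (α - 1) * ((-3 * α + √(3 * α * (4 - α))) / (2 * (1 - α)) *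
      ((-3 * α - √(3 * α * (4 - α))) / (2 * (1 - α)))) = 3 * α := by
  have h : 1 - α ≠ 0 := sub_ne_zero.mpr hα1.symm
  have hsq : √(3 * α * (4 - α)) ^ 2 = 3 * α * (4 - α) :=
    Real.sq_sqrt (by have := sub_nonneg.mpr hα4; positivity)
  generalize √(3 * α * (4 - α)) = s at hsq ⊢
  field_simp
  linear_combination (1 - α) * hsq

theorem stmt_9 (α : ℝ) (hα : 0 < α) (hα4 : α < 4) (hα1 : α ≠ 1)
    (d₁ d₂ : ℝ)
    (hd₁ : d₁ = (-3 * α + Real.sqrt (3 * α * (4 - α))) / (2 * (1 - α)))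
    (hd₂ : d₂ = (-3 * α - Real.sqrt (3 * α * (4 - α))) / (2 * (1 - α))) :
    ∀ n n₁ n₂ : ℤ, n = n₁ + n₂ →
      1 ≤ |(n₁ : ℝ) - d₁ * (n : ℝ)| → 1 ≤ |(n₁ : ℝ) - d₂ * (n : ℝ)| →
      |α - 1| * |d₁ - d₂| / 2 * |(n₁ : ℝ)| * |(n : ℝ)| ≤
        |α * (n : ℝ) ^ 3 - (n₁ : ℝ) ^ 3 - α * (n₂ : ℝ) ^ 3| := by
  intro n n₁ n₂ hn h₁ h₂
  have hsum : (α - 1) * (d₁ + d₂) = 3 * α := hd₁ ▸ hd₂ ▸ resonance_roots_add hα1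
  have hprod : (α - 1) * (d₁ * d₂) = 3 * α :=
    hd₁ ▸ hd₂ ▸ resonance_roots_mul hα1 hα.le hα4.le
  rw [resonance_eq_mul_of_vieta hsum hprod _ _ _ (mod_cast hn)]
  have hgap : |d₁ - d₂| * |(n : ℝ)| ≤ 2 * (|(n₁ : ℝ) - d₂ * n| * |(n₁ : ℝ) - d₁ * n|) := by
    have := abs_sub_le_two_mul_abs_mul_abs h₂ h₁
    rwa [sub_sub_sub_cancel_left, ← sub_mul, abs_mul] at this
  calc |α - 1| * |d₁ - d₂| / 2 * |(n₁ : ℝ)| * |(n : ℝ)|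
      = |α - 1| * |(n₁ : ℝ)| * (|d₁ - d₂| * |(n : ℝ)| / 2) := by ring
    _ ≤ |α - 1| * |(n₁ : ℝ)| * (|(n₁ : ℝ) - d₁ * n| * |(n₁ : ℝ) - d₂ * n|) := by
      gcongr; linarith
    _ = _ := by simp only [abs_mul, mul_assoc]
end

section
/- Let α ∈ (0,4) with α ≠ 1. Then there exist constants δ > 0 and C > 0, depending only on α, such that for all integers n, n₁, n₂ with n = n₁ + n₂ and such that |n₁| ≤ δ|n| or |n₂| ≤ δ|n|, one has |n³ − α n₁³ − α n₂³| ≥ C |n|³. -/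
theorem stmt_10 (α : ℝ) (hα : 0 < α) (hα4 : α < 4) (hα1 : α ≠ 1) :
    ∃ δ > 0, ∃ C > 0, ∀ n n₁ n₂ : ℤ, n = n₁ + n₂ →
      (|(n₁ : ℝ)| ≤ δ * |(n : ℝ)| ∨ |(n₂ : ℝ)| ≤ δ * |(n : ℝ)|) →
      C * |(n : ℝ)| ^ 3 ≤
        |(n : ℝ) ^ 3 - α * (n₁ : ℝ) ^ 3 - α * (n₂ : ℝ) ^ 3| := by
  have h1 : (0:ℝ) < |1 - α| := abs_pos.mpr (sub_ne_zero.mpr (fun h => hα1 (by linarith)))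
  set δ : ℝ := min 1 (|1 - α| / (12 * α)) with hδdef
  have hδpos : 0 < δ := lt_min one_pos (by positivity)
  have hδ1 : δ ≤ 1 := min_le_left _ _
  have hδ2 : δ ≤ |1 - α| / (12 * α) := min_le_right _ _
  refine ⟨δ, hδpos, |1 - α| / 2, by positivity, ?_⟩
  intro n n₁ n₂ hsum hcase
  have key : ∀ a : ℝ, |a| ≤ δ * |(n:ℝ)| →
      |1 - α| / 2 * |(n:ℝ)| ^ 3 ≤ |(n:ℝ) ^ 3 - α * a ^ 3 - α * ((n:ℝ) - a) ^ 3| := by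
    intro a ha
    set N := |(n:ℝ)| with hN
    set A := |a| with hA
    have hN0 : 0 ≤ N := abs_nonneg _
    have hA0 : 0 ≤ A := abs_nonneg _
    have hAN : A ≤ N := le_trans ha (by nlinarith)
    have hAδN : A ≤ δ * N := ha
    have e : (n:ℝ) ^ 3 - α * a ^ 3 - α * ((n:ℝ) - a) ^ 3
        = (1 - α) * (n:ℝ) ^ 3 + 3 * α * (n:ℝ) ^ 2 * a - 3 * α * (n:ℝ) * a ^ 2 := by ring
    rw [e]
    have b1 : |(1 - α) * (n:ℝ) ^ 3| = |1 - α| * N ^ 3 := by rw [abs_mul, abs_pow]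
    have hδα : 12 * α * δ ≤ |1 - α| := by
      rw [le_div_iff₀ (by positivity)] at hδ2; linarith
    have b2 : |3 * α * (n:ℝ) ^ 2 * a| ≤ |1 - α| / 4 * N ^ 3 := by
      have h0 : |3 * α * (n:ℝ) ^ 2 * a| = 3 * α * N ^ 2 * A := by
        rw [abs_mul, abs_mul, abs_mul, abs_pow, abs_of_pos hα, hN, hA]
        norm_num
      rw [h0]
      have h3 : 3 * α * N ^ 2 * A ≤ 3 * α * N ^ 2 * (δ * N) :=
        mul_le_mul_of_nonneg_left hAδN (by positivity)
      have h4 : 12 * α * δ * N ^ 3 ≤ |1 - α| * N ^ 3 :=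
        mul_le_mul_of_nonneg_right hδα (pow_nonneg hN0 3)
      nlinarith
    have b3 : |3 * α * (n:ℝ) * a ^ 2| ≤ |1 - α| / 4 * N ^ 3 := by
      have h0 : |3 * α * (n:ℝ) * a ^ 2| = 3 * α * N * A ^ 2 := by
        rw [abs_mul, abs_mul, abs_mul, abs_pow, abs_of_pos hα, hN, hA]
        norm_num
      rw [h0]
      have hA2 : A ^ 2 ≤ δ * N * N := by nlinarith
      have h3 : 3 * α * N * A ^ 2 ≤ 3 * α * N * (δ * N * N) :=
        mul_le_mul_of_nonneg_left hA2 (by positivity)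
      have h4 : 12 * α * δ * N ^ 3 ≤ |1 - α| * N ^ 3 :=
        mul_le_mul_of_nonneg_right hδα (pow_nonneg hN0 3)
      nlinarith
    have htri : |1 - α| * N ^ 3 ≤
        |(1 - α) * (n:ℝ) ^ 3 + 3 * α * (n:ℝ) ^ 2 * a - 3 * α * (n:ℝ) * a ^ 2|
        + |3 * α * (n:ℝ) ^ 2 * a| + |3 * α * (n:ℝ) * a ^ 2| := by
      have h5 := abs_add_le ((1 - α) * (n:ℝ) ^ 3 + 3 * α * (n:ℝ) ^ 2 * a - 3 * α * (n:ℝ) * a ^ 2)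
        (3 * α * (n:ℝ) * a ^ 2 - 3 * α * (n:ℝ) ^ 2 * a)
      have h6 : ((1 - α) * (n:ℝ) ^ 3 + 3 * α * (n:ℝ) ^ 2 * a - 3 * α * (n:ℝ) * a ^ 2)
          + (3 * α * (n:ℝ) * a ^ 2 - 3 * α * (n:ℝ) ^ 2 * a) = (1 - α) * (n:ℝ) ^ 3 := by ring
      rw [h6, b1] at h5
      have h7 := abs_sub (3 * α * (n:ℝ) * a ^ 2) (3 * α * (n:ℝ) ^ 2 * a)
      linarith
    linarith
  have hn₂ : (n₂ : ℝ) = (n : ℝ) - (n₁ : ℝ) := by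
    have : (n : ℝ) = (n₁ : ℝ) + (n₂ : ℝ) := by exact_mod_cast congrArg (Int.cast : ℤ → ℝ) hsum
    linarith
  rcases hcase with h | h
  · have := key (n₁ : ℝ) h
    rwa [← hn₂] at this
  · have := key (n₂ : ℝ) h
    have e2 : (n:ℝ) ^ 3 - α * (n₂:ℝ) ^ 3 - α * ((n:ℝ) - (n₂:ℝ)) ^ 3
        = (n:ℝ) ^ 3 - α * (n₁:ℝ) ^ 3 - α * (n₂:ℝ) ^ 3 := by
      rw [hn₂]; ring
    rwa [e2] at this
end

section
/- Let α ∈ (0,4) with α ≠ 1, set c₁ = 1/2 + √(12/α − 3)/6 and c₂ = 1/2 − √(12/α − 3)/6, and let s₁ ≥ 0 and s₂ be real numbers with s₂ ≤ 2s₁ and s₂ ≤ s₁ + 1/2. Then there exists a constant C > 0 such that for all integers n, n₁, n₂ with n = n₁ + n₂, n ≠ 0, |n₁ − c₁ n| ≥ 1, and |n₁ − c₂ n| ≥ 1, one has (1 + |n|)^{s₂ + 1} ≤ C · (1 + |n₁|)^{s₁} · (1 + |n₂|)^{s₁} · |n³ − α n₁³ − α n₂³|^{1/2}. -/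
/-!
Since `c₁ + c₂ = 1` and `3 α c₁ c₂ = α - 1`, the resonance function factors as
`n³ - α n₁³ - α n₂³ = -3 α n (n₁ - c₁ n) (n₁ - c₂ n)`.
If `n₁` lies within `δ |n| / 2` of one of the roots `c₁ n`, `c₂ n`, where `δ = min |c₁| |c₂|`
is positive because `α ≠ 1`, then `|n₁|` and `|n₂|` are both comparable to `|n|`, and the
resonance function is still of size `|n|²`: the two distances to the roots add up to
`|c₁ - c₂| |n|` and are both at least `1`. This controls `(1 + |n|) ^ (2 s₁ + 1)`.
Otherwise both distances are of size `|n|`, the resonance function is of size `|n|³`, and this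
controls `(1 + |n|) ^ (s₁ + 3 / 2)`.
-/

lemma rpow_le_mul_rpow_of_le_mul {a b k t : ℝ} (ha : 0 ≤ a) (hb : 0 ≤ b) (hk : 0 ≤ k)
    (ht : 0 ≤ t) (h : a ≤ k * b) : a ^ t ≤ k ^ t * b ^ t := by
  rw [← Real.mul_rpow hk hb]
  exact Real.rpow_le_rpow ha h ht

lemma rpow_le_of_pow_le {A B E K κ s t : ℝ} {m p : ℕ} (hA : 1 ≤ A) (hB : 0 ≤ B) (hK : 0 ≤ K)
    (hκ : 0 < κ) (hs : 0 ≤ s) (hst : t ≤ m * s + p / 2) (hAB : A ^ m ≤ K * B)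
    (hAE : κ * A ^ p ≤ E) :
    A ^ t ≤ K ^ s * κ⁻¹ ^ (1 / 2 : ℝ) * B ^ s * E ^ (1 / 2 : ℝ) := by
  have hA₀ : 0 ≤ A := by linarith
  have hE₀ : 0 ≤ E := le_trans (by positivity) hAE
  have hAE' : A ^ p ≤ κ⁻¹ * E := by
    rw [inv_mul_eq_div, le_div_iff₀ hκ, mul_comm]
    exact hAE
  calc A ^ t ≤ A ^ ((m : ℝ) * s + p * (1 / 2 : ℝ)) :=
        Real.rpow_le_rpow_of_exponent_le hA (by linarith)
    _ = (A ^ m) ^ s * (A ^ p) ^ (1 / 2 : ℝ) := by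
        rw [Real.rpow_add (by linarith), Real.rpow_natCast_mul hA₀, Real.rpow_natCast_mul hA₀]
    _ ≤ (K ^ s * B ^ s) * (κ⁻¹ ^ (1 / 2 : ℝ) * E ^ (1 / 2 : ℝ)) := by
        gcongr ?_ * ?_
        · exact rpow_le_mul_rpow_of_le_mul (by positivity) hB hK hs hAB
        · exact rpow_le_mul_rpow_of_le_mul (by positivity) hE₀ (by positivity) (by norm_num) hAE'
    _ = K ^ s * κ⁻¹ ^ (1 / 2 : ℝ) * B ^ s * E ^ (1 / 2 : ℝ) := by ring

lemma one_add_abs_add_le (x y : ℝ) : 1 + |x + y| ≤ (1 + |x|) * (1 + |y|) := by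
  nlinarith [abs_add_le x y, abs_nonneg x, abs_nonneg y, mul_nonneg (abs_nonneg x) (abs_nonneg y)]

section Resonance

variable {α c₁ c₂ n n₁ n₂ : ℝ}

lemma resonance_eq (hsum : c₁ + c₂ = 1) (hprod : 3 * α * c₁ * c₂ = α - 1) (hn : n = n₁ + n₂) :
    n ^ 3 - α * n₁ ^ 3 - α * n₂ ^ 3 = -(3 * α) * n * (n₁ - c₁ * n) * (n₁ - c₂ * n) := by
  obtain rfl : n₂ = n - n₁ := by linarith
  linear_combination n ^ 3 * hprod - 3 * α * n ^ 2 * n₁ * hsum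

lemma abs_resonance_eq (hα : 0 < α) (hsum : c₁ + c₂ = 1) (hprod : 3 * α * c₁ * c₂ = α - 1)
    (hn : n = n₁ + n₂) :
    |n ^ 3 - α * n₁ ^ 3 - α * n₂ ^ 3| = 3 * α * |n| * |n₁ - c₁ * n| * |n₁ - c₂ * n| := by
  rw [resonance_eq hsum hprod hn, abs_mul, abs_mul, abs_mul, abs_neg,
    abs_of_pos (by positivity : 0 < 3 * α)]

lemma sq_le_abs_resonance (hα : 0 < α) (hsum : c₁ + c₂ = 1) (hprod : 3 * α * c₁ * c₂ = α - 1)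
    (hn : n = n₁ + n₂) (hN : 1 ≤ |n|) (h₁ : 1 ≤ |n₁ - c₁ * n|) (h₂ : 1 ≤ |n₁ - c₂ * n|) :
    3 * α * |c₁ - c₂| / 8 * (1 + |n|) ^ 2 ≤ |n ^ 3 - α * n₁ ^ 3 - α * n₂ ^ 3| := by
  have hsep : |c₁ - c₂| * |n| ≤ |n₁ - c₂ * n| + |n₁ - c₁ * n| := by
    calc |c₁ - c₂| * |n| = |(n₁ - c₂ * n) - (n₁ - c₁ * n)| := by rw [← abs_mul]; ring_nf
      _ ≤ |n₁ - c₂ * n| + |n₁ - c₁ * n| := abs_sub _ _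
  have hprod_ge : |c₁ - c₂| * |n| / 2 ≤ |n₁ - c₁ * n| * |n₁ - c₂ * n| := by
    nlinarith [mul_nonneg (sub_nonneg.2 h₁) (sub_nonneg.2 h₂)]
  rw [abs_resonance_eq hα hsum hprod hn]
  calc 3 * α * |c₁ - c₂| / 8 * (1 + |n|) ^ 2 ≤ 3 * α * |c₁ - c₂| / 8 * (2 * |n|) ^ 2 := by
        gcongr; linarith
    _ = 3 * α * |n| * (|c₁ - c₂| * |n| / 2) := by ring
    _ ≤ 3 * α * |n| * (|n₁ - c₁ * n| * |n₁ - c₂ * n|) := by gcongr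
    _ = 3 * α * |n| * |n₁ - c₁ * n| * |n₁ - c₂ * n| := by ring

lemma cube_le_abs_resonance (hα : 0 < α) (hsum : c₁ + c₂ = 1)
    (hprod : 3 * α * c₁ * c₂ = α - 1) (hn : n = n₁ + n₂) (hN : 1 ≤ |n|) {δ : ℝ} (hδ : 0 ≤ δ)
    (h₁ : δ * |n| / 2 ≤ |n₁ - c₁ * n|) (h₂ : δ * |n| / 2 ≤ |n₁ - c₂ * n|) :
    3 * α * δ ^ 2 / 32 * (1 + |n|) ^ 3 ≤ |n ^ 3 - α * n₁ ^ 3 - α * n₂ ^ 3| := by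
  rw [abs_resonance_eq hα hsum hprod hn]
  calc 3 * α * δ ^ 2 / 32 * (1 + |n|) ^ 3 ≤ 3 * α * δ ^ 2 / 32 * (2 * |n|) ^ 3 := by
        gcongr; linarith
    _ = 3 * α * |n| * (δ * |n| / 2) * (δ * |n| / 2) := by ring
    _ ≤ 3 * α * |n| * |n₁ - c₁ * n| * |n₁ - c₂ * n| := by gcongr

lemma abs_le_of_near_root (hsum : c₁ + c₂ = 1) (hn : n = n₁ + n₂) :
    |c₁| * |n| ≤ |n₁| + |n₁ - c₁ * n| ∧ |c₂| * |n| ≤ |n₂| + |n₁ - c₁ * n| := by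
  have hsym : n₂ - c₂ * n = -(n₁ - c₁ * n) := by linear_combination -hn - n * hsum
  constructor
  · calc |c₁| * |n| = |n₁ - (n₁ - c₁ * n)| := by rw [← abs_mul]; ring_nf
      _ ≤ |n₁| + |n₁ - c₁ * n| := abs_sub _ _
  · calc |c₂| * |n| = |n₂ - (n₂ - c₂ * n)| := by rw [← abs_mul]; ring_nf
      _ ≤ |n₂| + |n₂ - c₂ * n| := abs_sub _ _
      _ = |n₂| + |n₁ - c₁ * n| := by rw [hsym, abs_neg]

lemma sq_le_mul_of_near_root (hsum : c₁ + c₂ = 1) (hn : n = n₁ + n₂) (hN : 1 ≤ |n|) {δ : ℝ}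
    (hδ : 0 < δ) (hδ₁ : δ ≤ |c₁|) (hδ₂ : δ ≤ |c₂|) (hnear : |n₁ - c₁ * n| ≤ δ * |n| / 2) :
    (1 + |n|) ^ 2 ≤ (4 / δ) ^ 2 * ((1 + |n₁|) * (1 + |n₂|)) := by
  obtain ⟨h₁, h₂⟩ := abs_le_of_near_root hsum hn
  have hA : δ * (1 + |n|) / 4 ≤ δ * |n| / 2 := by nlinarith
  have hA₁ : δ * (1 + |n|) / 4 ≤ 1 + |n₁| := by nlinarith
  have hA₂ : δ * (1 + |n|) / 4 ≤ 1 + |n₂| := by nlinarith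
  calc (1 + |n|) ^ 2 = (4 / δ) ^ 2 * ((δ * (1 + |n|) / 4) * (δ * (1 + |n|) / 4)) := by
        field_simp
    _ ≤ (4 / δ) ^ 2 * ((1 + |n₁|) * (1 + |n₂|)) := by gcongr

theorem exists_nonresonant_bound (hα : 0 < α) (hsum : c₁ + c₂ = 1)
    (hprod : 3 * α * c₁ * c₂ = α - 1) (hne : c₁ ≠ c₂) (hc : c₁ * c₂ ≠ 0) {s₁ s₂ : ℝ}
    (hs₁ : 0 ≤ s₁) (hs₂ : s₂ ≤ 2 * s₁) (hs₂' : s₂ ≤ s₁ + 1 / 2) :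
    ∃ C > 0, ∀ n n₁ n₂ : ℝ, n = n₁ + n₂ → 1 ≤ |n| →
      1 ≤ |n₁ - c₁ * n| → 1 ≤ |n₁ - c₂ * n| →
      (1 + |n|) ^ (s₂ + 1) ≤
        C * (1 + |n₁|) ^ s₁ * (1 + |n₂|) ^ s₁ * |n ^ 3 - α * n₁ ^ 3 - α * n₂ ^ 3| ^ ((1 : ℝ) / 2) := by
  obtain ⟨hc₁, hc₂⟩ := mul_ne_zero_iff.1 hc
  set δ := min |c₁| |c₂|
  have hδ : 0 < δ := lt_min (abs_pos.2 hc₁) (abs_pos.2 hc₂)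
  have hsep : 0 < 3 * α * |c₁ - c₂| / 8 := by have := abs_pos.2 (sub_ne_zero.2 hne); positivity
  refine ⟨max (((4 / δ) ^ 2) ^ s₁ * (3 * α * |c₁ - c₂| / 8)⁻¹ ^ (1 / 2 : ℝ))
    ((1 : ℝ) ^ s₁ * (3 * α * δ ^ 2 / 32)⁻¹ ^ (1 / 2 : ℝ)), by positivity, ?_⟩
  intro n n₁ n₂ hn hN h₁ h₂
  rw [mul_assoc _ ((1 + |n₁|) ^ s₁), ← Real.mul_rpow (by positivity) (by positivity)]
  by_cases hnear : |n₁ - c₁ * n| ≤ δ * |n| / 2 ∨ |n₁ - c₂ * n| ≤ δ * |n| / 2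
  · have hAB : (1 + |n|) ^ 2 ≤ (4 / δ) ^ 2 * ((1 + |n₁|) * (1 + |n₂|)) := by
      rcases hnear with hnear | hnear
      · exact sq_le_mul_of_near_root hsum hn hN hδ (min_le_left _ _) (min_le_right _ _) hnear
      · exact sq_le_mul_of_near_root ((add_comm _ _).trans hsum) hn hN hδ (min_le_right _ _)
          (min_le_left _ _) hnear
    calc _ ≤ _ := rpow_le_of_pow_le (by linarith) (by positivity) (by positivity) hsep hs₁
          (by push_cast; linarith) hAB (sq_le_abs_resonance hα hsum hprod hn hN h₁ h₂)
      _ ≤ _ := by gcongr; exact le_max_left _ _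
  · simp only [not_or, not_le] at hnear
    have hAB : (1 + |n|) ^ 1 ≤ 1 * ((1 + |n₁|) * (1 + |n₂|)) := by
      rw [pow_one, one_mul, hn]
      exact one_add_abs_add_le n₁ n₂
    calc _ ≤ _ := rpow_le_of_pow_le (by linarith) (by positivity) zero_le_one (by positivity) hs₁
          (by push_cast; linarith) hAB
          (cube_le_abs_resonance hα hsum hprod hn hN hδ.le hnear.1.le hnear.2.le)
      _ ≤ _ := by gcongr; exact le_max_right _ _

end Resonance

theorem stmt_11 (α : ℝ) (hα : 0 < α) (hα4 : α < 4) (hα1 : α ≠ 1)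
    (c₁ c₂ : ℝ)
    (hc₁ : c₁ = 1/2 + Real.sqrt (12/α - 3) / 6)
    (hc₂ : c₂ = 1/2 - Real.sqrt (12/α - 3) / 6)
    (s₁ s₂ : ℝ) (hs₁ : 0 ≤ s₁) (hs₂ : s₂ ≤ 2 * s₁) (hs₂' : s₂ ≤ s₁ + 1/2) :
    ∃ C > 0, ∀ n n₁ n₂ : ℤ, n = n₁ + n₂ → n ≠ 0 →
      1 ≤ |(n₁ : ℝ) - c₁ * (n : ℝ)| → 1 ≤ |(n₁ : ℝ) - c₂ * (n : ℝ)| →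
      (1 + |(n : ℝ)|) ^ (s₂ + 1) ≤
        C * (1 + |(n₁ : ℝ)|) ^ s₁ * (1 + |(n₂ : ℝ)|) ^ s₁ *
          |(n : ℝ) ^ 3 - α * (n₁ : ℝ) ^ 3 - α * (n₂ : ℝ) ^ 3| ^ ((1 : ℝ)/2) := by
  have hdisc : 0 < 12 / α - 3 := by
    have : 3 < 12 / α := by rw [lt_div_iff₀ hα]; linarith
    linarith
  have hsum : c₁ + c₂ = 1 := by rw [hc₁, hc₂]; ring
  have hprod : 3 * α * c₁ * c₂ = α - 1 := by
    have hsq := Real.sq_sqrt hdisc.le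
    have hcancel : α * (12 / α) = 12 := mul_div_cancel₀ 12 hα.ne'
    rw [hc₁, hc₂]
    linear_combination (-α / 12) * hsq - (1 / 12) * hcancel
  have hne : c₁ ≠ c₂ := by
    have := Real.sqrt_pos.2 hdisc
    rw [hc₁, hc₂]
    intro h
    linarith
  have hc : c₁ * c₂ ≠ 0 := by
    intro h
    apply hα1
    linear_combination -hprod + 3 * α * h
  obtain ⟨C, hC, hbound⟩ := exists_nonresonant_bound hα hsum hprod hne hc hs₁ hs₂ hs₂'
  refine ⟨C, hC, fun n n₁ n₂ hn hn0 h₁ h₂ => hbound _ _ _ (by exact_mod_cast hn) ?_ h₁ h₂⟩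
  rw [← Int.cast_abs]
  exact_mod_cast Int.one_le_abs hn0
end

section
/- Let α ∈ (0,4) with α ≠ 1, set c₁ = 1/2 + √(12/α − 3)/6 and c₂ = 1/2 − √(12/α − 3)/6, and suppose c₁ is of type (K, ν) for some K, ν > 0. Let s₁ ≥ 0 and s₂ ≥ 1/2 + ν/2. Then there exists a constant C > 0 such that for all integers n, n₁, n₂ with n = n₁ + n₂, n ≠ 0, and with |n₁ − c₁ n| < 1 or |n₁ − c₂ n| < 1, one has (1 + |n|)^{s₁ + 1} ≤ C · (1 + |n₁|)^{s₁} · (1 + |n₂|)^{s₂} · |n³ − α n₁³ − α n₂³|^{1/2}. -/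
/-!
Since `3α c₁ (1 - c₁) = α - 1`, the resonance function factors as
`n³ - α n₁³ - α n₂³ = 3α n (n₁ - c₁ n) (n₂ - c₁ n)`, and `n₁ - c₂ n = -(n₂ - c₁ n)`.
The Diophantine condition bounds both linear factors below by `K / |n|^(1+ν)`; their sum is at
least `|1 - 2c₁| |n|`, so if one of them is below `1` the other is `≳ |n|`. Hence the resonance
function is `≳ |n|^(1-ν)`, while near a resonance `|n₁|` and `|n₂|` are both `≳ |n|`. Splitting
`|n|^(s₁+1) = |n|^s₁ · |n|^((1+ν)/2) · |n|^((1-ν)/2)` over the three factors gives the bound.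
-/

namespace IsOfType

variable {ρ K ν : ℝ}

theorem irrational (h : IsOfType ρ K ν) (hK : 0 < K) : Irrational ρ := by
  rintro ⟨q, rfl⟩
  have hq := h q.num q.den (by exact_mod_cast q.den_nz)
  rw [Int.cast_natCast, ← Rat.cast_def, sub_self, abs_zero] at hq
  exact hq.not_gt (by positivity)

theorem div_rpow_le_abs_sub_mul (h : IsOfType ρ K ν) (m : ℤ) {q : ℤ} (hq : q ≠ 0) :
    K / |(q : ℝ)| ^ (1 + ν) ≤ |m - ρ * q| := by
  have hq' : (0 : ℝ) < |(q : ℝ)| := abs_pos.mpr (by exact_mod_cast hq)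
  calc K / |(q : ℝ)| ^ (1 + ν) = K / |(q : ℝ)| ^ (2 + ν) * |(q : ℝ)| := by
        rw [show (2 : ℝ) + ν = 1 + ν + 1 by ring, Real.rpow_add_one hq'.ne']
        field_simp
    _ ≤ |ρ - m / q| * |(q : ℝ)| := by gcongr; exact h m q hq
    _ = |m - ρ * q| := by
        rw [← abs_mul, abs_sub_comm, sub_mul, div_mul_cancel₀ _ (by exact_mod_cast hq)]

end IsOfType

theorem resonance_eq_mul_s12 {R : Type*} [CommRing R] {α c n n₁ n₂ : R}
    (hc : 3 * α * c * (1 - c) = α - 1) (hn : n = n₁ + n₂) :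
    n ^ 3 - α * n₁ ^ 3 - α * n₂ ^ 3 = 3 * α * n * (n₁ - c * n) * (n₂ - c * n) := by
  subst hn
  linear_combination (n₁ + n₂) ^ 3 * hc

section

variable {R : Type*} [CommRing R] [LinearOrder R] [IsStrictOrderedRing R]

theorem abs_mul_le_one_add_abs {c x y : R} (h : |x - c * y| < 1) : |c| * |y| ≤ 1 + |x| := by
  have := abs_sub_abs_le_abs_sub (c * y) x
  rw [abs_sub_comm, abs_mul] at this
  linarith

theorem min_abs_mul_le_one_add_abs {c n n₁ n₂ : R} (hn : n = n₁ + n₂)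
    (h : |n₁ - c * n| < 1 ∨ |n₂ - c * n| < 1) :
    min |c| |1 - c| * |n| ≤ 1 + |n₁| := by
  rcases h with h | h
  · exact (mul_le_mul_of_nonneg_right (min_le_left _ _) (abs_nonneg n)).trans
      (abs_mul_le_one_add_abs h)
  · have h' : |n₁ - (1 - c) * n| < 1 := by
      rwa [show n₁ - (1 - c) * n = -(n₂ - c * n) by rw [hn]; ring, abs_neg]
    exact (mul_le_mul_of_nonneg_right (min_le_right _ _) (abs_nonneg n)).trans
      (abs_mul_le_one_add_abs h')

end

section

variable {d K ν N x y : ℝ}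

theorem min_mul_le_of_add_le (hd : 0 < d) (hK : 0 ≤ K) (hν : 0 ≤ ν) (hN : 1 ≤ N)
    (hx : K / N ^ (1 + ν) ≤ x) (hy : y < 1) (hxy : d * N ≤ x + y) :
    min (d / 2) (K * (d / 2) ^ (2 + ν)) * N ≤ x := by
  have hN0 : 0 < N := one_pos.trans_le hN
  -- For `N ≤ 2 / d` the Diophantine bound alone gives `x ≳ N`; otherwise `x > d N - 1 ≥ d N / 2`.
  rcases le_or_gt (d / 2 * N) 1 with hsmall | hlarge
  · have hpow : (d / 2 * N) ^ (2 + ν) ≤ 1 := Real.rpow_le_one (by positivity) hsmall (by linarith)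
    calc min (d / 2) (K * (d / 2) ^ (2 + ν)) * N ≤ K * (d / 2) ^ (2 + ν) * N := by
          gcongr; exact min_le_right _ _
      _ = K * (d / 2 * N) ^ (2 + ν) / N ^ (1 + ν) := by
          rw [Real.mul_rpow (by positivity) hN0.le, show (2 : ℝ) + ν = 1 + ν + 1 by ring,
            Real.rpow_add_one hN0.ne']
          field_simp
      _ ≤ K / N ^ (1 + ν) := by gcongr; exact mul_le_of_le_one_right hK hpow
      _ ≤ x := hx
  · calc min (d / 2) (K * (d / 2) ^ (2 + ν)) * N ≤ d / 2 * N := by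
          gcongr; exact min_le_left _ _
      _ ≤ x := by linarith

theorem min_mul_le_mul_mul_rpow (hd : 0 < d) (hK : 0 < K) (hν : 0 ≤ ν) (hN : 1 ≤ N)
    (hx : K / N ^ (1 + ν) ≤ x) (hy : K / N ^ (1 + ν) ≤ y) (hxy : d * N ≤ x + y)
    (hnear : x < 1 ∨ y < 1) :
    min (d / 2) (K * (d / 2) ^ (2 + ν)) * K ≤ x * y * N ^ ν := by
  wlog hy1 : y < 1 generalizing x y
  · rw [mul_comm x y]
    exact this hy hx (by linarith) hnear.symm (hnear.resolve_right hy1)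
  have hN0 : 0 < N := one_pos.trans_le hN
  have hfar := min_mul_le_of_add_le hd hK.le hν hN hx hy1 hxy
  calc min (d / 2) (K * (d / 2) ^ (2 + ν)) * K
      = min (d / 2) (K * (d / 2) ^ (2 + ν)) * N * (K / N ^ (1 + ν)) * N ^ ν := by
        rw [add_comm 1 ν, Real.rpow_add_one hN0.ne']; field_simp
    _ ≤ x * y * N ^ ν := by gcongr; exact (by positivity : (0 : ℝ) ≤ _).trans hfar
end

section

variable {ν N m r X Y R s₁ s₂ : ℝ}

theorem rpow_half_mul_le (hN : 0 < N) (hm : 0 < m) (hr : 0 < r) (hν : 0 ≤ ν)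
    (hs₂ : 1 / 2 + ν / 2 ≤ s₂) (hY : m * N ≤ Y) (hY1 : 1 ≤ Y) (hR : r * N ≤ R * N ^ ν) :
    (m ^ (1 + ν) * r) ^ (1 / 2 : ℝ) * N ≤ Y ^ s₂ * R ^ (1 / 2 : ℝ) := by
  have hR0 : 0 < R :=
    lt_of_mul_lt_mul_right (by rw [zero_mul]; exact (by positivity : 0 < r * N).trans_le hR)
      (Real.rpow_nonneg hN.le ν)
  have hsq : m ^ (1 + ν) * r * N ^ 2 ≤ Y ^ (1 + ν) * R :=
    calc m ^ (1 + ν) * r * N ^ 2 = m ^ (1 + ν) * N * (r * N) := by ring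
      _ ≤ m ^ (1 + ν) * N * (R * N ^ ν) := by gcongr
      _ = (m * N) ^ (1 + ν) * R := by
          rw [Real.mul_rpow hm.le hN.le, add_comm 1 ν, Real.rpow_add_one hN.ne']; ring
      _ ≤ Y ^ (1 + ν) * R := by gcongr
  calc (m ^ (1 + ν) * r) ^ (1 / 2 : ℝ) * N = (m ^ (1 + ν) * r * N ^ 2) ^ (1 / 2 : ℝ) := by
        rw [Real.mul_rpow (by positivity : 0 ≤ m ^ (1 + ν) * r) (sq_nonneg N),
          ← Real.sqrt_eq_rpow (N ^ 2), Real.sqrt_sq hN.le]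
    _ ≤ (Y ^ (1 + ν) * R) ^ (1 / 2 : ℝ) := by gcongr
    _ = Y ^ (1 / 2 + ν / 2) * R ^ (1 / 2 : ℝ) := by
        rw [Real.mul_rpow (by positivity) hR0.le, ← Real.rpow_mul (by positivity)]; ring_nf
    _ ≤ Y ^ s₂ * R ^ (1 / 2 : ℝ) := by gcongr

theorem one_add_rpow_le (hN : 1 ≤ N) (hm : 0 < m) (hr : 0 < r) (hν : 0 ≤ ν) (hs₁ : 0 ≤ s₁)
    (hs₂ : 1 / 2 + ν / 2 ≤ s₂) (hX : m * N ≤ X) (hY : m * N ≤ Y) (hY1 : 1 ≤ Y)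
    (hR : r * N ≤ R * N ^ ν) :
    (1 + N) ^ (s₁ + 1) ≤
      2 ^ (s₁ + 1) / (m ^ s₁ * (m ^ (1 + ν) * r) ^ (1 / 2 : ℝ)) * X ^ s₁ * Y ^ s₂ *
        R ^ (1 / 2 : ℝ) := by
  have hN0 : 0 < N := one_pos.trans_le hN
  have hXs : m ^ s₁ * N ^ s₁ ≤ X ^ s₁ := by
    rw [← Real.mul_rpow hm.le hN0.le]; gcongr
  have hYR := rpow_half_mul_le hN0 hm hr hν hs₂ hY hY1 hR
  calc (1 + N) ^ (s₁ + 1) ≤ (2 * N) ^ (s₁ + 1) := by gcongr; linarith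
    _ = 2 ^ (s₁ + 1) / (m ^ s₁ * (m ^ (1 + ν) * r) ^ (1 / 2 : ℝ)) *
          (m ^ s₁ * N ^ s₁) * ((m ^ (1 + ν) * r) ^ (1 / 2 : ℝ) * N) := by
        rw [Real.mul_rpow (by norm_num) hN0.le, Real.rpow_add_one hN0.ne']
        field_simp
    _ ≤ _ := by
        have hX0 : 0 ≤ X := (by positivity : 0 ≤ m * N).trans hX
        rw [mul_assoc _ (Y ^ s₂)]
        gcongr

theorem three_mul_mul_one_sub_eq_of_eq_half_add_sqrt {α c : ℝ} (hα : 0 < α) (hα4 : α ≤ 4)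
    (hc : c = 1 / 2 + √(12 / α - 3) / 6) : 3 * α * c * (1 - c) = α - 1 := by
  have hsq : √(12 / α - 3) ^ 2 = 12 / α - 3 :=
    Real.sq_sqrt (by rw [sub_nonneg, le_div_iff₀ hα]; linarith)
  have hroot : c * (1 - c) = 1 / 3 - 1 / (3 * α) := by
    rw [hc]; linear_combination (-1 / 36 : ℝ) * hsq
  rw [mul_assoc, hroot]
  field_simp

theorem exists_resonance_bound {α c K ν s₁ s₂ : ℝ} (hα : 0 < α)
    (hc : 3 * α * c * (1 - c) = α - 1) (hK : 0 < K) (hν : 0 ≤ ν) (htype : IsOfType c K ν)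
    (hs₁ : 0 ≤ s₁) (hs₂ : 1 / 2 + ν / 2 ≤ s₂) :
    ∃ C > 0, ∀ n n₁ n₂ : ℤ, n = n₁ + n₂ → n ≠ 0 →
      (|(n₁ : ℝ) - c * n| < 1 ∨ |(n₂ : ℝ) - c * n| < 1) →
      (1 + |(n : ℝ)|) ^ (s₁ + 1) ≤
        C * (1 + |(n₁ : ℝ)|) ^ s₁ * (1 + |(n₂ : ℝ)|) ^ s₂ *
          |(n : ℝ) ^ 3 - α * (n₁ : ℝ) ^ 3 - α * (n₂ : ℝ) ^ 3| ^ ((1 : ℝ) / 2) := by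
  have hirr := htype.irrational hK
  set m := min |c| |1 - c|
  have hm : 0 < m := lt_min (abs_pos.2 hirr.ne_zero) (abs_pos.2 (sub_ne_zero.2 hirr.ne_one.symm))
  set d := |1 - 2 * c|
  have hd : 0 < d := abs_pos.2 fun h => hirr.ne_rat (1 / 2) (by push_cast; linarith)
  set ε := min (d / 2) (K * (d / 2) ^ (2 + ν))
  have hε : 0 < ε := lt_min (by positivity) (by positivity)
  refine ⟨2 ^ (s₁ + 1) / (m ^ s₁ * (m ^ (1 + ν) * (3 * α * ε * K)) ^ (1 / 2 : ℝ)),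
    by positivity, fun n n₁ n₂ hn hn0 hnear => ?_⟩
  have hnR : (n : ℝ) = n₁ + n₂ := by exact_mod_cast hn
  have hN : 1 ≤ |(n : ℝ)| := by exact_mod_cast Int.one_le_abs hn0
  have hprod : ε * K ≤ |(n₁ : ℝ) - c * n| * |(n₂ : ℝ) - c * n| * |(n : ℝ)| ^ ν := by
    refine min_mul_le_mul_mul_rpow hd hK hν hN (htype.div_rpow_le_abs_sub_mul n₁ hn0)
      (htype.div_rpow_le_abs_sub_mul n₂ hn0) ?_ hnear
    calc d * |(n : ℝ)| = |((n₁ : ℝ) - c * n) + ((n₂ : ℝ) - c * n)| := by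
          rw [← abs_mul]; congr 1; rw [hnR]; ring
      _ ≤ _ := abs_add_le _ _
  have hres : 3 * α * ε * K * |(n : ℝ)| ≤
      |(n : ℝ) ^ 3 - α * (n₁ : ℝ) ^ 3 - α * (n₂ : ℝ) ^ 3| * |(n : ℝ)| ^ ν := by
    rw [resonance_eq_mul_s12 hc hnR, abs_mul, abs_mul, abs_mul, abs_of_pos (by positivity : 0 < 3 * α)]
    calc 3 * α * ε * K * |(n : ℝ)| = 3 * α * |(n : ℝ)| * (ε * K) := by ring
      _ ≤ 3 * α * |(n : ℝ)| * (|(n₁ : ℝ) - c * n| * |(n₂ : ℝ) - c * n| * |(n : ℝ)| ^ ν) := by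
          gcongr
      _ = _ := by ring
  exact one_add_rpow_le hN hm (by positivity) hν hs₁ hs₂ (min_abs_mul_le_one_add_abs hnR hnear)
    (min_abs_mul_le_one_add_abs (hnR.trans (add_comm _ _)) hnear.symm)
    (by linarith [abs_nonneg (n₂ : ℝ)]) hres

theorem stmt_12_general (α : ℝ) (hα : 0 < α) (hα4 : α < 4)
    (c₁ c₂ : ℝ)
    (hc₁ : c₁ = 1/2 + Real.sqrt (12/α - 3) / 6)
    (hc₂ : c₂ = 1/2 - Real.sqrt (12/α - 3) / 6)
    (K ν : ℝ) (hK : 0 < K) (hν : 0 < ν) (htype : IsOfType c₁ K ν)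
    (s₁ s₂ : ℝ) (hs₁ : 0 ≤ s₁) (hs₂ : 1/2 + ν/2 ≤ s₂) :
    ∃ C > 0, ∀ n n₁ n₂ : ℤ, n = n₁ + n₂ → n ≠ 0 →
      (|(n₁ : ℝ) - c₁ * (n : ℝ)| < 1 ∨ |(n₁ : ℝ) - c₂ * (n : ℝ)| < 1) →
      (1 + |(n : ℝ)|) ^ (s₁ + 1) ≤
        C * (1 + |(n₁ : ℝ)|) ^ s₁ * (1 + |(n₂ : ℝ)|) ^ s₂ *
          |(n : ℝ) ^ 3 - α * (n₁ : ℝ) ^ 3 - α * (n₂ : ℝ) ^ 3| ^ ((1 : ℝ)/2) := by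
  obtain ⟨C, hC, hbound⟩ := exists_resonance_bound hα
    (three_mul_mul_one_sub_eq_of_eq_half_add_sqrt hα hα4.le hc₁) hK hν.le htype hs₁ hs₂
  refine ⟨C, hC, fun n n₁ n₂ hn hn0 hnear => hbound n n₁ n₂ hn hn0 ?_⟩
  have hnR : (n : ℝ) = n₁ + n₂ := by exact_mod_cast hn
  have hswap : (n₁ : ℝ) - c₂ * n = -((n₂ : ℝ) - c₁ * n) := by rw [hc₂, hc₁, hnR]; ring
  rwa [hswap, abs_neg] at hnear

theorem stmt_12 (α : ℝ) (hα : 0 < α) (hα4 : α < 4) (hα1 : α ≠ 1)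
    (c₁ c₂ : ℝ)
    (hc₁ : c₁ = 1/2 + Real.sqrt (12/α - 3) / 6)
    (hc₂ : c₂ = 1/2 - Real.sqrt (12/α - 3) / 6)
    (K ν : ℝ) (hK : 0 < K) (hν : 0 < ν) (htype : IsOfType c₁ K ν)
    (s₁ s₂ : ℝ) (hs₁ : 0 ≤ s₁) (hs₂ : 1/2 + ν/2 ≤ s₂) :
    ∃ C > 0, ∀ n n₁ n₂ : ℤ, n = n₁ + n₂ → n ≠ 0 →
      (|(n₁ : ℝ) - c₁ * (n : ℝ)| < 1 ∨ |(n₁ : ℝ) - c₂ * (n : ℝ)| < 1) →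
      (1 + |(n : ℝ)|) ^ (s₁ + 1) ≤
        C * (1 + |(n₁ : ℝ)|) ^ s₁ * (1 + |(n₂ : ℝ)|) ^ s₂ *
          |(n : ℝ) ^ 3 - α * (n₁ : ℝ) ^ 3 - α * (n₂ : ℝ) ^ 3| ^ ((1 : ℝ)/2) :=
  stmt_12_general α hα hα4 c₁ c₂ hc₁ hc₂ K ν hK hν htype s₁ s₂ hs₁ hs₂
end
end

section
/- Let 0 < s < 1/2 and B > 0, and let (g_n)_{n≥1} and (h_n)_{n≥1} be mutually independent standard real (mean 0, variance 1) Gaussian random variables; set f_n = g_n + i·h_n. Then there exist constants c > 0 and K₀ > 0, depending only on s and B, such that for all K ≥ K₀ one has P( Σ_{n≥1} n^{2s−2} |f_n|² > K² and Σ_{n≥1} n^{−2} |f_n|² ≤ B² ) ≤ exp(−c K²). -/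
/-!
A union bound over `n` already controls the larger event `∑ n^(2s-2) |f_n|² > K²`.
With `γ = 1/2 - s` the weights `n^(2s-2+γ)` are summable, so on that event some coefficient
is large, `|f_n|² ≳ K² n^γ`.
Each Gaussian coefficient exceeds that level with probability `≲ exp(-a n^γ)`, `a ≍ K²`, and
since `a n^γ ≥ a + a γ log n`, for large `a` these bounds sum to at most `exp(-a/2)`.
-/

open MeasureTheory ProbabilityTheory Real Filter
open scoped ENNReal NNReal

lemma ENNReal.exists_lt_mul_of_lt_tsum {ι : Type*} {a w : ι → ℝ≥0∞} {c : ℝ≥0∞}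
    (hw : ∑' i, w i ≤ 1) (h : c < ∑' i, a i) : ∃ i, c * w i < a i := by
  by_contra! hle
  refine h.not_ge ?_
  calc ∑' i, a i ≤ ∑' i, c * w i := ENNReal.tsum_le_tsum hle
    _ = c * ∑' i, w i := ENNReal.tsum_mul_left
    _ ≤ c := mul_le_of_le_one_right' hw

lemma ProbabilityTheory.HasSubgaussianMGF.measure_lt_sq_le {Ω : Type*} {m : MeasurableSpace Ω}
    {μ : Measure Ω} [IsFiniteMeasure μ] {X : Ω → ℝ} {c : ℝ≥0} (hX : HasSubgaussianMGF X c μ)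
    {T : ℝ} (hT : 0 ≤ T) :
    μ {ω | T < X ω ^ 2} ≤ ENNReal.ofReal (2 * exp (-T / (2 * c))) := by
  have htail : ∀ Y : Ω → ℝ, HasSubgaussianMGF Y c μ →
      μ {ω | √T ≤ Y ω} ≤ ENNReal.ofReal (exp (-T / (2 * c))) := by
    intro Y hY
    rw [← ofReal_measureReal]
    exact ENNReal.ofReal_le_ofReal (by simpa [sq_sqrt hT] using hY.measure_ge_le (sqrt_nonneg T))
  have hsplit : {ω | T < X ω ^ 2} ⊆ {ω | √T ≤ X ω} ∪ {ω | √T ≤ (-X) ω} := by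
    intro ω hω
    have : √T ≤ |X ω| := by
      rw [← sqrt_sq_eq_abs]
      exact sqrt_le_sqrt (le_of_lt hω)
    rcases abs_cases (X ω) with ⟨hx, _⟩ | ⟨hx, _⟩
    · exact Or.inl (by simp only [Set.mem_ofPred_eq]; linarith)
    · exact Or.inr (by simp only [Set.mem_ofPred_eq, Pi.neg_apply]; linarith)
  calc μ {ω | T < X ω ^ 2} ≤ μ {ω | √T ≤ X ω} + μ {ω | √T ≤ (-X) ω} :=
        (measure_mono hsplit).trans (measure_union_le _ _)
    _ ≤ ENNReal.ofReal (exp (-T / (2 * c))) + ENNReal.ofReal (exp (-T / (2 * c))) :=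
        add_le_add (htail X hX) (htail _ hX.neg)
    _ = ENNReal.ofReal (2 * exp (-T / (2 * c))) := by
        rw [← ENNReal.ofReal_add (by positivity) (by positivity), ← two_mul]

lemma ProbabilityTheory.hasSubgaussianMGF_of_map_eq_gaussianReal {Ω : Type*}
    {m : MeasurableSpace Ω} {μ : Measure Ω} {X : Ω → ℝ} (hX : μ.map X = gaussianReal 0 1) :
    HasSubgaussianMGF X 1 μ := by
  have hXm : AEMeasurable X μ :=
    AEMeasurable.of_map_ne_zero (by rw [hX]; exact IsProbabilityMeasure.ne_zero _)
  rw [← HasSubgaussianMGF.id_map_iff hXm, hX]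
  exact ⟨integrable_exp_mul_gaussianReal, fun t ↦ by simp [mgf_id_gaussianReal]⟩

lemma exp_neg_mul_rpow_le {a γ x : ℝ} (ha : 0 ≤ a) (haγ : 2 ≤ a * γ) (hx : 1 ≤ x) :
    exp (-(a * x ^ γ)) ≤ exp (-a) * x ^ (-2 : ℝ) := by
  have hx0 : 0 < x := by linarith
  have hlog : 0 ≤ log x := log_nonneg hx
  have hpow : 1 + γ * log x ≤ x ^ γ := by
    rw [rpow_def_of_pos hx0]
    linarith [add_one_le_exp (log x * γ)]
  rw [rpow_def_of_pos hx0 (-2), ← exp_add]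
  refine exp_le_exp.2 ?_
  nlinarith [mul_le_mul_of_nonneg_left hpow ha, mul_nonneg (sub_nonneg.2 haγ) hlog]

lemma eventually_tsum_ofReal_mul_exp_neg_mul_rpow_le {C γ : ℝ} (hC : 0 ≤ C) (hγ : 0 < γ) :
    ∀ᶠ a in atTop, ∑' n : {n : ℕ // 1 ≤ n}, ENNReal.ofReal (C * exp (-(a * (n : ℝ) ^ γ))) ≤
      ENNReal.ofReal (exp (-(a / 2))) := by
  obtain ⟨Z, hZ⟩ : Summable fun n : {n : ℕ // 1 ≤ n} ↦ (n : ℝ) ^ (-2 : ℝ) :=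
    (summable_nat_rpow.mpr (by norm_num)).subtype _
  have hlarge : ∀ᶠ a in atTop, C * Z ≤ exp (a / 2) :=
    (tendsto_exp_atTop.comp (tendsto_id.atTop_div_const two_pos)).eventually_ge_atTop _
  filter_upwards [hlarge, eventually_ge_atTop (2 / γ), eventually_ge_atTop 0] with a hCZ haγ ha
  have hterm : ∀ n : {n : ℕ // 1 ≤ n},
      C * exp (-(a * (n : ℝ) ^ γ)) ≤ C * exp (-a) * (n : ℝ) ^ (-2 : ℝ) := fun n ↦ by
    rw [mul_assoc]
    exact mul_le_mul_of_nonneg_left (exp_neg_mul_rpow_le ha ((div_le_iff₀ hγ).1 haγ)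
      (by exact_mod_cast n.2)) hC
  calc ∑' n : {n : ℕ // 1 ≤ n}, ENNReal.ofReal (C * exp (-(a * (n : ℝ) ^ γ)))
      ≤ ∑' n : {n : ℕ // 1 ≤ n}, ENNReal.ofReal (C * exp (-a) * (n : ℝ) ^ (-2 : ℝ)) :=
        ENNReal.tsum_le_tsum fun n ↦ ENNReal.ofReal_le_ofReal (hterm n)
    _ = ENNReal.ofReal (C * exp (-a) * Z) := by
        rw [← ENNReal.ofReal_tsum_of_nonneg (fun _ ↦ by positivity) (hZ.mul_left _).summable,
          (hZ.mul_left _).tsum_eq]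
    _ ≤ ENNReal.ofReal (exp (-(a / 2))) := by
        refine ENNReal.ofReal_le_ofReal ?_
        calc C * exp (-a) * Z = C * Z * exp (-a) := by ring
          _ ≤ exp (a / 2) * exp (-a) := mul_le_mul_of_nonneg_right hCZ (exp_nonneg _)
          _ = exp (-(a / 2)) := by rw [← exp_add]; ring_nf

lemma one_le_of_hasSum_rpow {q Z : ℝ}
    (hZ : HasSum (fun n : {n : ℕ // 1 ≤ n} ↦ (n : ℝ) ^ q) Z) : 1 ≤ Z := by
  simpa using le_hasSum hZ ⟨1, le_rfl⟩ fun _ _ ↦ by positivity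

lemma exists_lt_sq_of_lt_tsum {p γ Z K : ℝ}
    (hZ : HasSum (fun n : {n : ℕ // 1 ≤ n} ↦ (n : ℝ) ^ (p + γ)) Z)
    {x y : {n : ℕ // 1 ≤ n} → ℝ}
    (h : ENNReal.ofReal (K ^ 2) <
      ∑' n : {n : ℕ // 1 ≤ n}, ENNReal.ofReal ((n : ℝ) ^ p * ‖(x n : ℂ) + Complex.I * y n‖ ^ 2)) :
    ∃ n : {n : ℕ // 1 ≤ n},
      K ^ 2 * (n : ℝ) ^ γ / (2 * Z) < x n ^ 2 ∨ K ^ 2 * (n : ℝ) ^ γ / (2 * Z) < y n ^ 2 := by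
  have hZpos : 0 < Z := one_pos.trans_le (one_le_of_hasSum_rpow hZ)
  have hw : ∑' n : {n : ℕ // 1 ≤ n}, ENNReal.ofReal ((n : ℝ) ^ (p + γ) / Z) ≤ 1 := by
    rw [← ENNReal.ofReal_tsum_of_nonneg (fun _ ↦ by positivity) (hZ.div_const Z).summable,
      (hZ.div_const Z).tsum_eq, div_self hZpos.ne', ENNReal.ofReal_one]
  obtain ⟨n, hn⟩ := ENNReal.exists_lt_mul_of_lt_tsum hw h
  have hn0 : (0 : ℝ) < n := by exact_mod_cast n.2
  rw [← ENNReal.ofReal_mul (sq_nonneg K), ENNReal.ofReal_lt_ofReal_iff_of_nonneg (by positivity),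
    mul_comm Complex.I, Complex.sq_norm, Complex.normSq_add_mul_I, rpow_add hn0] at hn
  have hsum : K ^ 2 * (n : ℝ) ^ γ / Z < x n ^ 2 + y n ^ 2 := by
    refine lt_of_mul_lt_mul_left ?_ (rpow_nonneg hn0.le p)
    calc (n : ℝ) ^ p * (K ^ 2 * (n : ℝ) ^ γ / Z) = K ^ 2 * ((n : ℝ) ^ p * (n : ℝ) ^ γ / Z) := by
          ring
      _ < _ := hn
  by_contra! hsmall
  obtain ⟨hx, hy⟩ := hsmall n
  rw [mul_comm 2 Z, ← div_div] at hx hy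
  linarith

lemma measure_lt_tsum_le_tsum_exp {Ω : Type*} {m : MeasurableSpace Ω} (μ : Measure Ω)
    [IsFiniteMeasure μ] {p γ Z : ℝ} (hZ : HasSum (fun n : {n : ℕ // 1 ≤ n} ↦ (n : ℝ) ^ (p + γ)) Z)
    {g h : ℕ → Ω → ℝ} (hg : ∀ n, μ.map (g n) = gaussianReal 0 1)
    (hh : ∀ n, μ.map (h n) = gaussianReal 0 1) (K : ℝ) :
    μ {ω | ENNReal.ofReal (K ^ 2) < ∑' n : {n : ℕ // 1 ≤ n},
        ENNReal.ofReal ((n : ℝ) ^ p * ‖(g n ω : ℂ) + Complex.I * h n ω‖ ^ 2)} ≤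
      ∑' n : {n : ℕ // 1 ≤ n}, ENNReal.ofReal (4 * exp (-(K ^ 2 / (4 * Z) * (n : ℝ) ^ γ))) := by
  have hZpos : 0 < Z := one_pos.trans_le (one_le_of_hasSum_rpow hZ)
  set t : {n : ℕ // 1 ≤ n} → ℝ := fun n ↦ K ^ 2 * (n : ℝ) ^ γ / (2 * Z)
  have ht : ∀ n, 0 ≤ t n := fun n ↦ by positivity
  have htail : ∀ (X : Ω → ℝ), μ.map X = gaussianReal 0 1 → ∀ n,
      μ {ω | t n < X ω ^ 2} ≤ ENNReal.ofReal (2 * exp (-(K ^ 2 / (4 * Z) * (n : ℝ) ^ γ))) := by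
    intro X hX n
    convert (hasSubgaussianMGF_of_map_eq_gaussianReal hX).measure_lt_sq_le (ht n) using 4
    simp only [t, NNReal.coe_one]
    ring
  calc _ ≤ μ (⋃ n, {ω | t n < g n ω ^ 2} ∪ {ω | t n < h n ω ^ 2}) := by
        refine measure_mono fun ω hω ↦ ?_
        obtain ⟨n, hn⟩ := exists_lt_sq_of_lt_tsum hZ hω
        exact Set.mem_iUnion.2 ⟨n, hn⟩
    _ ≤ ∑' n, μ ({ω | t n < g n ω ^ 2} ∪ {ω | t n < h n ω ^ 2}) := measure_iUnion_le _
    _ ≤ _ := by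
        refine ENNReal.tsum_le_tsum fun n ↦ (measure_union_le _ _).trans ?_
        refine (add_le_add (htail _ (hg n) n) (htail _ (hh n) n)).trans_eq ?_
        rw [← ENNReal.ofReal_add (by positivity) (by positivity)]
        ring_nf

theorem stmt_15_general (s : ℝ) (hs : s < 1/2) (B : ℝ) :
    ∃ c > (0 : ℝ), ∃ K₀ > (0 : ℝ),
      ∀ (Ω : Type) (_ : MeasureSpace Ω), IsProbabilityMeasure (volume : Measure Ω) →
      ∀ (g h : ℕ → Ω → ℝ),
        iIndepFun (Sum.elim g h) volume →
        (∀ n : ℕ, Measure.map (g n) volume = gaussianReal 0 1) →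
        (∀ n : ℕ, Measure.map (h n) volume = gaussianReal 0 1) →
        ∀ K : ℝ, K₀ ≤ K →
          volume {ω |
              (ENNReal.ofReal (K ^ 2) <
                ∑' n : {n : ℕ // 1 ≤ n}, ENNReal.ofReal
                  (((n : ℕ) : ℝ) ^ (2 * s - 2) *
                    ‖(g n ω : ℂ) + Complex.I * (h n ω : ℂ)‖ ^ 2)) ∧
              (∑' n : {n : ℕ // 1 ≤ n}, ENNReal.ofReal
                  (((n : ℕ) : ℝ) ^ (-2 : ℝ) *
                    ‖(g n ω : ℂ) + Complex.I * (h n ω : ℂ)‖ ^ 2)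
                ≤ ENNReal.ofReal (B ^ 2))} ≤
            ENNReal.ofReal (Real.exp (-c * K ^ 2)) := by
  have hγ : 0 < 1 / 2 - s := by linarith
  obtain ⟨Z, hZ⟩ : Summable fun n : {n : ℕ // 1 ≤ n} ↦ (n : ℝ) ^ (2 * s - 2 + (1 / 2 - s)) :=
    (summable_nat_rpow.mpr (by linarith)).subtype _
  have hZpos : 0 < Z := one_pos.trans_le (one_le_of_hasSum_rpow hZ)
  have hscale : Tendsto (fun K : ℝ ↦ K ^ 2 / (4 * Z)) atTop atTop :=
    (tendsto_pow_atTop two_ne_zero).atTop_div_const (by positivity)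
  obtain ⟨K₀, hK₀⟩ := eventually_atTop.1
    (hscale.eventually (eventually_tsum_ofReal_mul_exp_neg_mul_rpow_le zero_le_four hγ))
  refine ⟨1 / (8 * Z), by positivity, max K₀ 1, by positivity, ?_⟩
  intro Ω _ _ g h _ hg hh K hK
  calc _ ≤ _ := measure_mono fun ω hω ↦ hω.1
    _ ≤ _ := measure_lt_tsum_le_tsum_exp volume hZ hg hh K
    _ ≤ _ := hK₀ K (le_of_max_le_left hK)
    _ = _ := by ring_nf

theorem stmt_15 (s : ℝ) (hs0 : 0 < s) (hs : s < 1/2) (B : ℝ) (hB : 0 < B) :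
    ∃ c > (0 : ℝ), ∃ K₀ > (0 : ℝ),
      ∀ (Ω : Type) (_ : MeasureSpace Ω), IsProbabilityMeasure (volume : Measure Ω) →
      ∀ (g h : ℕ → Ω → ℝ),
        iIndepFun (Sum.elim g h) volume →
        (∀ n : ℕ, Measure.map (g n) volume = gaussianReal 0 1) →
        (∀ n : ℕ, Measure.map (h n) volume = gaussianReal 0 1) →
        ∀ K : ℝ, K₀ ≤ K →
          volume {ω |
              (ENNReal.ofReal (K ^ 2) <
                ∑' n : {n : ℕ // 1 ≤ n}, ENNReal.ofReal
                  (((n : ℕ) : ℝ) ^ (2 * s - 2) *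
                    ‖(g n ω : ℂ) + Complex.I * (h n ω : ℂ)‖ ^ 2)) ∧
              (∑' n : {n : ℕ // 1 ≤ n}, ENNReal.ofReal
                  (((n : ℕ) : ℝ) ^ (-2 : ℝ) *
                    ‖(g n ω : ℂ) + Complex.I * (h n ω : ℂ)‖ ^ 2)
                ≤ ENNReal.ofReal (B ^ 2))} ≤
            ENNReal.ofReal (Real.exp (-c * K ^ 2)) :=
  stmt_15_general s hs B
end
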